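/- arXiv:1104.3739 — 4 statements merged into one kernel-verified Lean document; each statement's English description precedes it below -/
import Mathlib

section
/- For every real y > 0, one has z(1/y) = z(y); that is, the function y ↦ θ₂(y)⁴ θ₄(y)⁴ / θ₃(y)⁸ on the positive reals is invariant under the substitution y ↦ 1/y. -/
/-- Jacobi theta constant θ₂ on the imaginary axis. -/
noncomputable def theta2 (y : ℝ) : ℝ := ∑' n : ℤ, Real.exp (-Real.pi * y * (n + 1/2)^2)

/-- Jacobi theta constant θ₃ on the imaginary axis. -/
noncomputable def theta3 (y : ℝ) : ℝ := ∑' n : ℤ, Real.exp (-Real.pi * y * n^2)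

/-- Jacobi theta constant θ₄ on the imaginary axis. -/
noncomputable def theta4 (y : ℝ) : ℝ := ∑' n : ℤ, (-1 : ℝ)^n * Real.exp (-Real.pi * y * n^2)

/-- The function z(y) = θ₂(y)⁴θ₄(y)⁴/θ₃(y)⁸. -/
noncomputable def zfun (y : ℝ) : ℝ := theta2 y ^ 4 * theta4 y ^ 4 / theta3 y ^ 8
/-!
Poisson summation turns the Gaussian `exp (-π (n + c)² / y)` summed over `n ∈ ℤ` into `√y` times
the sum of `exp (-π y n²)` twisted by the character `e^{-2πicn}`. With `c = 0` this gives
`θ₃(1/y) = √y θ₃(y)`, with `c = 1/2` it gives `θ₂(1/y) = √y θ₄(y)`, and the latter read at `1/y`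
gives `θ₄(1/y) = √y θ₂(y)`. The factors `√y` cancel in `θ₂⁴ θ₄⁴ / θ₃⁸`, which is moreover
symmetric in `θ₂, θ₄`.
-/

open Complex Real

lemma ofReal_sqrt_eq_cpow {y : ℝ} (hy : 0 ≤ y) : ((√y : ℝ) : ℂ) = (y : ℂ) ^ (1 / 2 : ℂ) := by
  rw [Real.sqrt_eq_rpow, ofReal_cpow hy]
  norm_num

theorem tsum_cexp_neg_div_mul_add_sq {y : ℝ} (hy : 0 < y) (c : ℝ) :
    ∑' n : ℤ, cexp (-π / y * (n + c) ^ 2) =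
      √y * ∑' n : ℤ, cexp (-π * y * n ^ 2 - 2 * π * I * c * n) := by
  have hshift : ∀ n : ℂ, n + I * (-I * c) = n + c := fun n => by
    rw [← mul_assoc, mul_neg, I_mul_I]; ring
  have hP := Complex.tsum_exp_neg_quadratic (a := y) (by simpa using hy) (-I * c)
  simp only [hshift] at hP
  have hne : (y : ℂ) ^ (1 / 2 : ℂ) ≠ 0 := by
    rw [← ofReal_sqrt_eq_cpow hy.le]; exact_mod_cast (Real.sqrt_pos.mpr hy).ne'
  have hphase : ∑' n : ℤ, cexp (-π * y * n ^ 2 - 2 * π * I * c * n) =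
      ∑' n : ℤ, cexp (-π * y * n ^ 2 + 2 * π * (-I * c) * n) :=
    tsum_congr fun n => congrArg cexp (by ring)
  rw [hphase, hP, ofReal_sqrt_eq_cpow hy.le, ← mul_assoc, mul_one_div_cancel hne, one_mul]

theorem ofReal_theta2 (y : ℝ) :
    (theta2 y : ℂ) = ∑' n : ℤ, cexp (-π * y * (n + 1 / 2) ^ 2) := by
  rw [theta2, ofReal_tsum]
  push_cast
  rfl

theorem ofReal_theta4 (y : ℝ) :
    (theta4 y : ℂ) = ∑' n : ℤ, (-1) ^ n * cexp (-π * y * n ^ 2) := by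
  rw [theta4, ofReal_tsum]
  push_cast
  rfl

theorem theta3_one_div {y : ℝ} (hy : 0 < y) : theta3 (1 / y) = √y * theta3 y := by
  have hs : 0 < √y := Real.sqrt_pos.mpr hy
  rw [theta3, theta3, Real.tsum_exp_neg_mul_int_sq hy, ← Real.sqrt_eq_rpow]
  simp only [mul_one_div]
  field_simp

theorem theta2_one_div {y : ℝ} (hy : 0 < y) : theta2 (1 / y) = √y * theta4 y := by
  apply ofReal_injective
  have h := tsum_cexp_neg_div_mul_add_sq hy (1 / 2)
  push_cast at h
  rw [ofReal_theta2, ofReal_mul, ofReal_theta4, ofReal_div, ofReal_one, mul_one_div, h]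
  congr 1
  refine tsum_congr fun n => ?_
  rw [show 2 * π * I * (1 / 2) * n = n * (π * I) by ring, Complex.exp_sub, exp_int_mul, exp_pi_mul_I,
    div_eq_mul_inv, ← inv_zpow, inv_neg_one, mul_comm]

theorem theta4_one_div {y : ℝ} (hy : 0 < y) : theta4 (1 / y) = √y * theta2 y := by
  have h := theta2_one_div (one_div_pos.mpr hy)
  have hs : 0 < √y := Real.sqrt_pos.mpr hy
  rw [one_div_one_div, one_div, Real.sqrt_inv] at h
  field_simp at h
  linarith

theorem zfun_inv_invariant : ∀ y : ℝ, 0 < y → zfun (1 / y) = zfun y := by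
  intro y hy
  have hs : √y ≠ 0 := (Real.sqrt_pos.mpr hy).ne'
  rw [zfun, zfun, theta2_one_div hy, theta3_one_div hy, theta4_one_div hy]
  field_simp
end

section
/- For every real y > 0, z(y) ≤ 1/4, with equality when y = 1; that is, the function y ↦ θ₂(y)⁴ θ₄(y)⁴ / θ₃(y)⁸ attains its maximum value 1/4 on (0,∞) at y = 1. -/
set_option maxHeartbeats 2000000

section Aux

open Real

/-! ### Summability -/

private lemma summable_theta_term {y : ℝ} (hy : 0 < y) {c : ℝ} (hc0 : 0 ≤ c) (hc1 : c ≤ 1/2) :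
    Summable fun n : ℤ => Real.exp (-Real.pi * y * ((n : ℝ) + c)^2) := by
  have hpy : 0 < Real.pi * y := mul_pos Real.pi_pos hy
  have hlt : Real.exp (-(Real.pi * y)) < 1 := Real.exp_lt_one_iff.mpr (by linarith)
  have hgeo : Summable fun n : ℕ => Real.exp (-(Real.pi * y)) ^ n :=
    summable_geometric_of_lt_one (Real.exp_pos _).le hlt
  apply Summable.of_nat_of_neg
  · refine Summable.of_nonneg_of_le (fun n => (Real.exp_pos _).le) (fun n => ?_) hgeo
    rw [← Real.exp_nat_mul]
    apply Real.exp_le_exp.mpr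
    push_cast
    have h1 : (n : ℝ) ≤ (n : ℝ)^2 := by exact_mod_cast Nat.le_self_pow (by norm_num) n
    have key : (n : ℝ) ≤ ((n:ℝ) + c)^2 := by
      nlinarith [mul_nonneg (Nat.cast_nonneg (α := ℝ) n) hc0, sq_nonneg c]
    nlinarith [mul_le_mul_of_nonneg_left key hpy.le]
  · refine Summable.of_nonneg_of_le (fun n => (Real.exp_pos _).le) (fun n => ?_)
      (hgeo.mul_left (Real.exp (Real.pi * y)))
    rw [← Real.exp_nat_mul, ← Real.exp_add]
    apply Real.exp_le_exp.mpr
    push_cast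
    have key : ((n:ℝ) - 1) ≤ (-(n:ℝ) + c)^2 := by
      nlinarith [sq_nonneg ((n:ℝ) - 1),
        mul_nonneg (Nat.cast_nonneg (α := ℝ) n) (by linarith : (0:ℝ) ≤ 1 - 2*c), sq_nonneg c]
    nlinarith [mul_le_mul_of_nonneg_left key hpy.le]

private lemma summable3 {y : ℝ} (hy : 0 < y) :
    Summable fun n : ℤ => Real.exp (-Real.pi * y * (n : ℝ)^2) := by
  simpa using summable_theta_term hy le_rfl (by norm_num)

private lemma summable2 {y : ℝ} (hy : 0 < y) :
    Summable fun n : ℤ => Real.exp (-Real.pi * y * ((n : ℝ) + 1/2)^2) :=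
  summable_theta_term hy (by norm_num) le_rfl

private lemma theta3_pos {y : ℝ} (hy : 0 < y) : 0 < theta3 y :=
  Summable.tsum_pos (summable3 hy) (fun _ => (Real.exp_pos _).le) 0 (Real.exp_pos _)

private lemma theta2_pos {y : ℝ} (hy : 0 < y) : 0 < theta2 y :=
  Summable.tsum_pos (summable2 hy) (fun _ => (Real.exp_pos _).le) 0 (Real.exp_pos _)

private lemma summable4 {y : ℝ} (hy : 0 < y) :
    Summable fun n : ℤ => (-1 : ℝ)^n * Real.exp (-Real.pi * y * (n : ℝ)^2) := by
  apply Summable.of_abs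
  have h : (fun n : ℤ => |(-1 : ℝ)^n * Real.exp (-Real.pi * y * (n : ℝ)^2)|)
      = fun n : ℤ => Real.exp (-Real.pi * y * (n : ℝ)^2) := by
    funext n
    have h1 : |(-1:ℝ)^n| = 1 := by
      rcases Int.even_or_odd n with h | h
      · rw [h.neg_one_zpow, abs_one]
      · rw [h.neg_one_zpow]; norm_num
    rw [abs_mul, h1, one_mul, abs_of_pos (Real.exp_pos _)]
  rw [h]
  exact summable3 hy

/-! ### Splitting a double sum over `ℤ × ℤ` by the parity of the sum of coordinates -/

private def dblMap : Bool × ℤ × ℤ → ℤ × ℤ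
  | (false, a, b) => (a + b, a - b)
  | (true, a, b) => (a + b + 1, a - b)

private def dblMap2 : Bool × ℤ × ℤ → ℤ × ℤ
  | (false, a, b) => (a + b, a - b)
  | (true, a, b) => (a + b, a - b - 1)

private lemma dblMap_bij : Function.Bijective dblMap := by
  constructor
  · rintro ⟨b1, a1, c1⟩ ⟨b2, a2, c2⟩ h
    cases b1 <;> cases b2 <;> simp only [dblMap, Prod.mk.injEq] at h <;>
      first
        | (exfalso; omega)
        | (obtain ⟨h1, h2⟩ : a1 = a2 ∧ c1 = c2 := by omega
           rw [h1, h2])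
  · rintro ⟨m, n⟩
    rcases Int.even_or_odd (m + n) with ⟨k, hk⟩ | ⟨k, hk⟩
    · exact ⟨(false, k, m - k), by simp only [dblMap, Prod.mk.injEq]; omega⟩
    · exact ⟨(true, k, m - k - 1), by simp only [dblMap, Prod.mk.injEq]; omega⟩

private lemma dblMap2_bij : Function.Bijective dblMap2 := by
  constructor
  · rintro ⟨b1, a1, c1⟩ ⟨b2, a2, c2⟩ h
    cases b1 <;> cases b2 <;> simp only [dblMap2, Prod.mk.injEq] at h <;>
      first
        | (exfalso; omega)
        | (obtain ⟨h1, h2⟩ : a1 = a2 ∧ c1 = c2 := by omega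
           rw [h1, h2])
  · rintro ⟨m, n⟩
    rcases Int.even_or_odd (m + n) with ⟨k, hk⟩ | ⟨k, hk⟩
    · exact ⟨(false, k, m - k), by simp only [dblMap2, Prod.mk.injEq]; omega⟩
    · exact ⟨(true, k + 1, m - k - 1), by simp only [dblMap2, Prod.mk.injEq]; omega⟩

private lemma split_even_odd (F : ℤ × ℤ → ℝ) (hF : Summable F) :
    ∑' z : ℤ × ℤ, F z = (∑' z : ℤ × ℤ, F (z.1 + z.2, z.1 - z.2))
      + ∑' z : ℤ × ℤ, F (z.1 + z.2 + 1, z.1 - z.2) := by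
  let e : Bool × ℤ × ℤ ≃ ℤ × ℤ := Equiv.ofBijective dblMap dblMap_bij
  have hs : Summable fun p : Bool × ℤ × ℤ => F (e p) := e.summable_iff.mpr hF
  rw [← e.tsum_eq, Summable.tsum_prod' hs hs.prod_factor, tsum_bool]
  rfl

private lemma split_even_odd2 (F : ℤ × ℤ → ℝ) (hF : Summable F) :
    ∑' z : ℤ × ℤ, F z = (∑' z : ℤ × ℤ, F (z.1 + z.2, z.1 - z.2))
      + ∑' z : ℤ × ℤ, F (z.1 + z.2, z.1 - z.2 - 1) := by
  let e : Bool × ℤ × ℤ ≃ ℤ × ℤ := Equiv.ofBijective dblMap2 dblMap2_bij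
  have hs : Summable fun p : Bool × ℤ × ℤ => F (e p) := e.summable_iff.mpr hF
  rw [← e.tsum_eq, Summable.tsum_prod' hs hs.prod_factor, tsum_bool]
  rfl

private lemma eN {y : ℝ} : ∀ n : ℤ, 0 ≤ Real.exp (-Real.pi * y * (n : ℝ)^2) :=
  fun _ => (Real.exp_pos _).le

private lemma eN2 {y : ℝ} : ∀ n : ℤ, 0 ≤ Real.exp (-Real.pi * y * ((n : ℝ) + 1/2)^2) :=
  fun _ => (Real.exp_pos _).le

/-! ### Landen-type doubling identities -/

private lemma theta3_sq {y : ℝ} (hy : 0 < y) :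
    theta3 y ^ 2 = theta3 (2*y) ^ 2 + theta2 (2*y) ^ 2 := by
  have h2y : 0 < 2*y := by linarith
  have S := summable3 hy
  have S3 := summable3 h2y
  have S2 := summable2 h2y
  have hprod : Summable fun z : ℤ × ℤ =>
      Real.exp (-Real.pi * y * (z.1:ℝ)^2) * Real.exp (-Real.pi * y * (z.2:ℝ)^2) :=
    S.mul_of_nonneg S eN eN
  rw [pow_two (theta3 y)]
  rw [theta3, Summable.tsum_mul_tsum S S hprod, split_even_odd _ hprod]
  congr 1
  · rw [pow_two (theta3 (2*y)),
      theta3, Summable.tsum_mul_tsum S3 S3 (S3.mul_of_nonneg S3 eN eN)]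
    apply tsum_congr
    rintro ⟨a, b⟩
    rw [← Real.exp_add, ← Real.exp_add]
    congr 1
    push_cast
    ring
  · rw [pow_two (theta2 (2*y)),
      theta2, Summable.tsum_mul_tsum S2 S2 (S2.mul_of_nonneg S2 eN2 eN2)]
    apply tsum_congr
    rintro ⟨a, b⟩
    rw [← Real.exp_add, ← Real.exp_add]
    congr 1
    push_cast
    ring

private lemma theta2_sq {y : ℝ} (hy : 0 < y) :
    theta2 y ^ 2 = 2 * (theta2 (2*y) * theta3 (2*y)) := by
  have h2y : 0 < 2*y := by linarith
  have S := summable2 hy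
  have S3 := summable3 h2y
  have S2 := summable2 h2y
  have hprod : Summable fun z : ℤ × ℤ =>
      Real.exp (-Real.pi * y * ((z.1:ℝ) + 1/2)^2)
        * Real.exp (-Real.pi * y * ((z.2:ℝ) + 1/2)^2) :=
    S.mul_of_nonneg S eN2 eN2
  rw [pow_two (theta2 y)]
  rw [theta2, Summable.tsum_mul_tsum S S hprod, split_even_odd2 _ hprod, two_mul]
  congr 1
  · rw [theta2, theta3, Summable.tsum_mul_tsum S2 S3 (S2.mul_of_nonneg S3 eN2 eN)]
    apply tsum_congr
    rintro ⟨a, b⟩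
    rw [← Real.exp_add, ← Real.exp_add]
    congr 1
    push_cast
    ring
  · rw [show theta2 (2*y) * theta3 (2*y) = theta3 (2*y) * theta2 (2*y) from mul_comm _ _,
      theta2, theta3, Summable.tsum_mul_tsum S3 S2 (S3.mul_of_nonneg S2 eN eN2)]
    apply tsum_congr
    rintro ⟨a, b⟩
    rw [← Real.exp_add, ← Real.exp_add]
    congr 1
    push_cast
    ring

private lemma theta4_sq {y : ℝ} (hy : 0 < y) :
    theta4 y ^ 2 = theta3 (2*y) ^ 2 - theta2 (2*y) ^ 2 := by
  have h2y : 0 < 2*y := by linarith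
  have S := summable4 hy
  have S3 := summable3 h2y
  have S2 := summable2 h2y
  have habs : Summable fun n : ℤ => ‖(-1 : ℝ)^n * Real.exp (-Real.pi * y * (n : ℝ)^2)‖ := by
    have h : (fun n : ℤ => ‖(-1 : ℝ)^n * Real.exp (-Real.pi * y * (n : ℝ)^2)‖)
        = fun n : ℤ => Real.exp (-Real.pi * y * (n : ℝ)^2) := by
      funext n
      have h1 : |(-1:ℝ)^n| = 1 := by
        rcases Int.even_or_odd n with h | h
        · rw [h.neg_one_zpow, abs_one]
        · rw [h.neg_one_zpow]; norm_num
      rw [Real.norm_eq_abs, abs_mul, h1, one_mul, abs_of_pos (Real.exp_pos _)]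
    rw [h]; exact summable3 hy
  have hprod : Summable fun z : ℤ × ℤ =>
      ((-1 : ℝ)^z.1 * Real.exp (-Real.pi * y * (z.1:ℝ)^2))
        * ((-1 : ℝ)^z.2 * Real.exp (-Real.pi * y * (z.2:ℝ)^2)) :=
    summable_mul_of_summable_norm habs habs
  have sgn_even : ∀ a b : ℤ, ((-1:ℝ)^(a+b)) * ((-1:ℝ)^(a-b)) = 1 := by
    intro a b
    rw [← zpow_add₀ (by norm_num : (-1:ℝ) ≠ 0)]
    rw [show a + b + (a - b) = 2*a from by ring, zpow_mul]
    norm_num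
  have sgn_odd : ∀ a b : ℤ, ((-1:ℝ)^(a+b+1)) * ((-1:ℝ)^(a-b)) = -1 := by
    intro a b
    rw [← zpow_add₀ (by norm_num : (-1:ℝ) ≠ 0)]
    rw [show a + b + 1 + (a - b) = 2*a + 1 from by ring,
      zpow_add₀ (by norm_num : (-1:ℝ) ≠ 0), zpow_mul]
    norm_num
  rw [pow_two (theta4 y)]
  rw [theta4, Summable.tsum_mul_tsum S S hprod, split_even_odd _ hprod, sub_eq_add_neg]
  congr 1
  · rw [pow_two (theta3 (2*y)),
      theta3, Summable.tsum_mul_tsum S3 S3 (S3.mul_of_nonneg S3 eN eN)]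
    apply tsum_congr
    rintro ⟨a, b⟩
    simp only
    rw [mul_mul_mul_comm, sgn_even, one_mul, ← Real.exp_add, ← Real.exp_add]
    congr 1
    push_cast
    ring
  · rw [pow_two (theta2 (2*y)),
      theta2, Summable.tsum_mul_tsum S2 S2 (S2.mul_of_nonneg S2 eN2 eN2), ← tsum_neg]
    apply tsum_congr
    rintro ⟨a, b⟩
    simp only
    rw [mul_mul_mul_comm, sgn_odd, neg_one_mul, ← Real.exp_add, ← Real.exp_add]
    congr 1
    push_cast
    ring

/-! ### Poisson summation : θ₂(1) = θ₄(1) -/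

private lemma theta2_one_eq_theta4_one : theta2 1 = theta4 1 := by
  have key := Complex.tsum_exp_neg_quadratic (a := 1) (by norm_num) (-Complex.I / 2)
  have hexpI : Complex.exp (-(Real.pi : ℂ) * Complex.I) = -1 := by
    rw [neg_mul, Complex.exp_neg, Complex.exp_pi_mul_I]
    norm_num
  have h4 : (∑' n : ℤ, Complex.exp (-(Real.pi:ℂ) * 1 * (n:ℂ) ^ 2
        + 2 * (Real.pi:ℂ) * (-Complex.I/2) * (n:ℂ)))
      = (theta4 1 : ℂ) := by
    rw [theta4, Complex.ofReal_tsum]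
    apply tsum_congr
    intro n
    rw [Complex.exp_add]
    have h1 : Complex.exp (2 * (Real.pi:ℂ) * (-Complex.I/2) * (n:ℂ)) = (-1 : ℂ) ^ n := by
      rw [show (2:ℂ) * (Real.pi:ℂ) * (-Complex.I/2) * (n:ℂ)
          = (n:ℤ) * (-(Real.pi:ℂ) * Complex.I) from by push_cast; ring]
      rw [Complex.exp_int_mul, hexpI]
    rw [h1]
    push_cast
    ring
  have h2 : (1:ℂ) / 1 ^ ((1:ℂ)/2) * (∑' n : ℤ, Complex.exp (-(Real.pi:ℂ) / 1
        * ((n:ℂ) + Complex.I * (-Complex.I/2)) ^ 2))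
      = (theta2 1 : ℂ) := by
    rw [Complex.one_cpow, div_one]
    rw [theta2, Complex.ofReal_tsum]
    simp only [one_mul]
    apply tsum_congr
    intro n
    rw [show Complex.I * (-Complex.I/2) = 1/2 from by
      rw [show Complex.I * (-Complex.I/2) = -(Complex.I*Complex.I)/2 from by ring,
        Complex.I_mul_I]; norm_num]
    push_cast
    rw [div_one]
    congr 1
    ring
  rw [← Complex.ofReal_inj, ← h4, ← h2]
  exact key.symm

end Aux

theorem zfun_le_quarter_max_at_one :
    (∀ y : ℝ, 0 < y → zfun y ≤ 1 / 4) ∧ zfun 1 = 1 / 4 := by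
  constructor
  · intro y hy
    have h2y : 0 < 2*y := by linarith
    set A := theta2 (2*y) with hA
    set B := theta3 (2*y) with hB
    have h2 := theta2_sq hy
    have h4 := theta4_sq hy
    have h3 := theta3_sq hy
    have hpos : 0 < theta3 y := theta3_pos hy
    rw [zfun, div_le_iff₀ (by positivity)]
    have e2 : theta2 y ^ 4 = (2*(A*B))^2 := by rw [← h2]; ring
    have e4 : theta4 y ^ 4 = (B^2 - A^2)^2 := by rw [← h4]; ring
    have e3 : theta3 y ^ 8 = (B^2 + A^2)^4 := by rw [← h3]; ring
    rw [e2, e4, e3,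
      show (B^2 + A^2)^4 = ((2*(A*B))^2 + (B^2 - A^2)^2)^2 from by ring]
    nlinarith [sq_nonneg ((2*(A*B))^2 - (B^2 - A^2)^2)]
  · have h2 := theta2_sq (y := 1) one_pos
    have h4 := theta4_sq (y := 1) one_pos
    have h3 := theta3_sq (y := 1) one_pos
    have heq := theta2_one_eq_theta4_one
    set A := theta2 (2*1) with hA
    set B := theta3 (2*1) with hB
    have hu : theta2 1 ^ 2 = B^2 - A^2 := by rw [heq, h4]
    have hnum : theta2 1 ^ 4 * theta4 1 ^ 4 = (theta2 1 ^ 2)^4 := by rw [← heq]; ring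
    have hden : theta3 1 ^ 8 = 4 * (theta2 1 ^ 2)^4 := by
      have k2 : (B^2 + A^2)^2 = 2*(theta2 1 ^ 2)^2 := by
        have k1 : (B^2 + A^2)^2 = (2*(A*B))^2 + (B^2 - A^2)^2 := by ring
        rw [k1, ← h2, ← hu]; ring
      calc theta3 1 ^ 8 = ((theta3 1 ^ 2)^2)^2 := by ring
        _ = ((B^2 + A^2)^2)^2 := by rw [h3]
        _ = (2*(theta2 1 ^ 2)^2)^2 := by rw [k2]
        _ = 4 * (theta2 1 ^ 2)^4 := by ring
    have h0 : (4:ℝ) * (theta2 1 ^ 2)^4 ≠ 0 :=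
      mul_ne_zero (by norm_num)
        (pow_ne_zero _ (pow_ne_zero _ (theta2_pos one_pos).ne'))
    rw [zfun, hnum, hden, div_eq_iff h0]
    ring
end

section
/- (Dimension 24 case of the main theorem.) Define P₂₄(z) = (1 − z)³ − (45/16) z². For every real y > 0, P₂₄(z(y)) ≥ P₂₄(1/4) > 0; consequently the secrecy function Ξ(y) = P₂₄(z(y))^{-1} of the extremal even unimodular lattice in dimension 24 satisfies Ξ(y) ≤ Ξ(1) = P₂₄(1/4)^{-1}. -/
/-- Denominator polynomial of the secrecy function of the extremal even
unimodular lattice in dimension 24. -/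
noncomputable def P24 (z : ℝ) : ℝ := (1 - z) ^ 3 - 45 / 16 * z ^ 2

open Real

namespace SecrecyAux

/-- Summability of the basic shifted Gaussian series over `ℤ`. -/
lemma summable_exp_sq (c : ℝ) {y : ℝ} (hy : 0 < y) :
    Summable fun n : ℤ => rexp (-π * y * ((n : ℝ) + c) ^ 2) := by
  have h := HurwitzKernelBounds.summable_f_int 0 c hy
  exact h.congr fun n => by
    rw [HurwitzKernelBounds.f_int, pow_zero, one_mul, mul_right_comm]

lemma summable3 {y : ℝ} (hy : 0 < y) :
    Summable fun n : ℤ => rexp (-π * y * (n : ℝ) ^ 2) := by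
  simpa using summable_exp_sq 0 hy

lemma summable2 {y : ℝ} (hy : 0 < y) :
    Summable fun n : ℤ => rexp (-π * y * ((n : ℝ) + 1/2) ^ 2) :=
  summable_exp_sq (1/2) hy

lemma snorm3 {y : ℝ} (hy : 0 < y) :
    Summable fun n : ℤ => ‖rexp (-π * y * (n : ℝ) ^ 2)‖ := by
  simpa only [Real.norm_eq_abs, Real.abs_exp] using summable3 hy

lemma snorm2 {y : ℝ} (hy : 0 < y) :
    Summable fun n : ℤ => ‖rexp (-π * y * ((n : ℝ) + 1/2) ^ 2)‖ := by
  simpa only [Real.norm_eq_abs, Real.abs_exp] using summable2 hy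

lemma snorm4 {y : ℝ} (hy : 0 < y) :
    Summable fun n : ℤ => ‖(-1 : ℝ) ^ n * rexp (-π * y * (n : ℝ) ^ 2)‖ := by
  have := snorm3 hy
  refine this.congr fun n => ?_
  rw [norm_mul, norm_zpow, norm_neg, norm_one, one_zpow, one_mul]

lemma summable4 {y : ℝ} (hy : 0 < y) :
    Summable fun n : ℤ => (-1 : ℝ) ^ n * rexp (-π * y * (n : ℝ) ^ 2) :=
  (snorm4 hy).of_norm

/-- The set of pairs with even coordinate sum. -/
def Sev : Set (ℤ × ℤ) := {q | (q.1 + q.2) % 2 = 0}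

/-- Parametrization of pairs with even coordinate sum. -/
def eEven : ℤ × ℤ ≃ Sev where
  toFun p := ⟨(p.1 + p.2, p.1 - p.2), by simp only [Sev, Set.mem_setOf_eq]; omega⟩
  invFun q := ((q.1.1 + q.1.2) / 2, (q.1.1 - q.1.2) / 2)
  left_inv p := by
    ext <;> simp <;> omega
  right_inv q := by
    have h := q.2
    simp only [Sev, Set.mem_setOf_eq] at h
    ext <;> simp <;> omega

/-- Parametrization of pairs with odd coordinate sum. -/
def eOdd : ℤ × ℤ ≃ ↥(Sevᶜ) where
  toFun p := ⟨(p.1 + p.2 + 1, p.1 - p.2), by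
    simp only [Sev, Set.mem_compl_iff, Set.mem_setOf_eq]; omega⟩
  invFun q := ((q.1.1 + q.1.2 - 1) / 2, (q.1.1 - q.1.2 - 1) / 2)
  left_inv p := by
    ext <;> simp <;> omega
  right_inv q := by
    have h := q.2
    simp only [Sev, Set.mem_compl_iff, Set.mem_setOf_eq] at h
    ext <;> simp <;> omega

lemma tsum_split (F : ℤ × ℤ → ℝ) (hF : Summable F) :
    ∑' q : ℤ × ℤ, F q =
      (∑' p : ℤ × ℤ, F (p.1 + p.2, p.1 - p.2)) +
        ∑' p : ℤ × ℤ, F (p.1 + p.2 + 1, p.1 - p.2) := by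
  have h1 : Summable (fun q : Sev => F q) := hF.subtype _
  have h2 : Summable (fun q : ↥(Sevᶜ) => F q) := hF.subtype _
  rw [(h1.hasSum.add_compl h2.hasSum).tsum_eq]
  congr 1
  · exact (Equiv.tsum_eq eEven (fun q : Sev => F q)).symm
  · exact (Equiv.tsum_eq eOdd (fun q : ↥(Sevᶜ) => F q)).symm

lemma snormc (c : ℝ) {y : ℝ} (hy : 0 < y) :
    Summable fun n : ℤ => ‖rexp (-π * y * ((n : ℝ) + c) ^ 2)‖ := by
  simpa only [Real.norm_eq_abs, Real.abs_exp] using summable_exp_sq c hy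

lemma idA {y : ℝ} (hy : 0 < y) :
    theta3 y ^ 2 = theta3 (2*y) ^ 2 + theta2 (2*y) ^ 2 := by
  have h2y : 0 < 2*y := by linarith
  have hprod : theta3 y ^ 2
      = ∑' p : ℤ × ℤ, rexp (-π*y*(p.1:ℝ)^2) * rexp (-π*y*(p.2:ℝ)^2) := by
    rw [sq, theta3]
    exact tsum_mul_tsum_of_summable_norm (snorm3 hy) (snorm3 hy)
  rw [hprod, tsum_split _ (summable_mul_of_summable_norm (snorm3 hy) (snorm3 hy))]
  congr 1
  · have h : ∀ p : ℤ × ℤ,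
        rexp (-π*y*(((p.1+p.2 : ℤ)):ℝ)^2) * rexp (-π*y*(((p.1-p.2 : ℤ)):ℝ)^2)
        = rexp (-π*(2*y)*(p.1:ℝ)^2) * rexp (-π*(2*y)*(p.2:ℝ)^2) := fun p => by
      rw [← Real.exp_add, ← Real.exp_add]; congr 1; push_cast; ring
    rw [tsum_congr h, ← tsum_mul_tsum_of_summable_norm (snorm3 h2y) (snorm3 h2y), sq, theta3]
  · have h : ∀ p : ℤ × ℤ,
        rexp (-π*y*(((p.1+p.2+1 : ℤ)):ℝ)^2) * rexp (-π*y*(((p.1-p.2 : ℤ)):ℝ)^2)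
        = rexp (-π*(2*y)*((p.1:ℝ)+1/2)^2) * rexp (-π*(2*y)*((p.2:ℝ)+1/2)^2) := fun p => by
      rw [← Real.exp_add, ← Real.exp_add]; congr 1; push_cast; ring
    rw [tsum_congr h, ← tsum_mul_tsum_of_summable_norm (snorm2 h2y) (snorm2 h2y), sq, theta2]

lemma idB {y : ℝ} (hy : 0 < y) :
    theta4 y ^ 2 = theta3 (2*y) ^ 2 - theta2 (2*y) ^ 2 := by
  have h2y : 0 < 2*y := by linarith
  have hprod : theta4 y ^ 2
      = ∑' p : ℤ × ℤ, ((-1:ℝ)^p.1 * rexp (-π*y*(p.1:ℝ)^2))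
          * ((-1:ℝ)^p.2 * rexp (-π*y*(p.2:ℝ)^2)) := by
    rw [sq, theta4]
    exact tsum_mul_tsum_of_summable_norm (snorm4 hy) (snorm4 hy)
  rw [hprod, tsum_split _ (summable_mul_of_summable_norm (snorm4 hy) (snorm4 hy)),
    sub_eq_add_neg]
  congr 1
  · have h : ∀ p : ℤ × ℤ,
        ((-1:ℝ)^(p.1+p.2) * rexp (-π*y*(((p.1+p.2 : ℤ)):ℝ)^2))
          * ((-1:ℝ)^(p.1-p.2) * rexp (-π*y*(((p.1-p.2 : ℤ)):ℝ)^2))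
        = rexp (-π*(2*y)*(p.1:ℝ)^2) * rexp (-π*(2*y)*(p.2:ℝ)^2) := fun p => by
      have hs : ((-1:ℝ))^(p.1+p.2) * (-1:ℝ)^(p.1-p.2) = 1 := by
        rw [← zpow_add₀ (by norm_num : (-1:ℝ) ≠ 0),
          show p.1+p.2+(p.1-p.2) = 2*p.1 by ring, zpow_mul]
        norm_num
      calc ((-1:ℝ)^(p.1+p.2) * rexp (-π*y*(((p.1+p.2 : ℤ)):ℝ)^2))
            * ((-1:ℝ)^(p.1-p.2) * rexp (-π*y*(((p.1-p.2 : ℤ)):ℝ)^2))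
          = ((-1:ℝ)^(p.1+p.2) * (-1:ℝ)^(p.1-p.2))
            * (rexp (-π*y*(((p.1+p.2 : ℤ)):ℝ)^2) * rexp (-π*y*(((p.1-p.2 : ℤ)):ℝ)^2)) := by
            ring
        _ = rexp (-π*(2*y)*(p.1:ℝ)^2) * rexp (-π*(2*y)*(p.2:ℝ)^2) := by
            rw [hs, one_mul, ← Real.exp_add, ← Real.exp_add]; congr 1; push_cast; ring
    rw [tsum_congr h, ← tsum_mul_tsum_of_summable_norm (snorm3 h2y) (snorm3 h2y), sq, theta3]
  · have h : ∀ p : ℤ × ℤ,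
        ((-1:ℝ)^(p.1+p.2+1) * rexp (-π*y*(((p.1+p.2+1 : ℤ)):ℝ)^2))
          * ((-1:ℝ)^(p.1-p.2) * rexp (-π*y*(((p.1-p.2 : ℤ)):ℝ)^2))
        = -(rexp (-π*(2*y)*((p.1:ℝ)+1/2)^2) * rexp (-π*(2*y)*((p.2:ℝ)+1/2)^2)) := fun p => by
      have hs : ((-1:ℝ))^(p.1+p.2+1) * (-1:ℝ)^(p.1-p.2) = -1 := by
        rw [← zpow_add₀ (by norm_num : (-1:ℝ) ≠ 0),
          show p.1+p.2+1+(p.1-p.2) = 2*p.1+1 by ring, zpow_add₀ (by norm_num : (-1:ℝ) ≠ 0),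
          zpow_mul]
        norm_num
      calc ((-1:ℝ)^(p.1+p.2+1) * rexp (-π*y*(((p.1+p.2+1 : ℤ)):ℝ)^2))
            * ((-1:ℝ)^(p.1-p.2) * rexp (-π*y*(((p.1-p.2 : ℤ)):ℝ)^2))
          = ((-1:ℝ)^(p.1+p.2+1) * (-1:ℝ)^(p.1-p.2))
            * (rexp (-π*y*(((p.1+p.2+1 : ℤ)):ℝ)^2) * rexp (-π*y*(((p.1-p.2 : ℤ)):ℝ)^2)) := by
            ring
        _ = -(rexp (-π*(2*y)*((p.1:ℝ)+1/2)^2) * rexp (-π*(2*y)*((p.2:ℝ)+1/2)^2)) := by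
            rw [hs, neg_one_mul, ← Real.exp_add, ← Real.exp_add]
            congr 2
            push_cast; ring
    rw [tsum_congr h, tsum_neg,
      ← tsum_mul_tsum_of_summable_norm (snorm2 h2y) (snorm2 h2y), sq, theta2]

lemma idC {y : ℝ} (hy : 0 < y) :
    theta2 y ^ 2 = 2 * (theta2 (2*y) * theta3 (2*y)) := by
  have h2y : 0 < 2*y := by linarith
  have hprod : theta2 y ^ 2
      = ∑' p : ℤ × ℤ, rexp (-π*y*((p.1:ℝ)+1/2)^2) * rexp (-π*y*((p.2:ℝ)+1/2)^2) := by
    rw [sq, theta2]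
    exact tsum_mul_tsum_of_summable_norm (snorm2 hy) (snorm2 hy)
  rw [hprod, tsum_split _ (summable_mul_of_summable_norm (snorm2 hy) (snorm2 hy))]
  have hb1 : (∑' p : ℤ × ℤ,
      rexp (-π*y*((((p.1+p.2 : ℤ)):ℝ)+1/2)^2) * rexp (-π*y*((((p.1-p.2 : ℤ)):ℝ)+1/2)^2))
      = theta2 (2*y) * theta3 (2*y) := by
    have h : ∀ p : ℤ × ℤ,
        rexp (-π*y*((((p.1+p.2 : ℤ)):ℝ)+1/2)^2) * rexp (-π*y*((((p.1-p.2 : ℤ)):ℝ)+1/2)^2)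
        = rexp (-π*(2*y)*((p.1:ℝ)+1/2)^2) * rexp (-π*(2*y)*(p.2:ℝ)^2) := fun p => by
      rw [← Real.exp_add, ← Real.exp_add]; congr 1; push_cast; ring
    rw [tsum_congr h, ← tsum_mul_tsum_of_summable_norm (snorm2 h2y) (snorm3 h2y), theta2, theta3]
  have hb2 : (∑' p : ℤ × ℤ,
      rexp (-π*y*((((p.1+p.2+1 : ℤ)):ℝ)+1/2)^2) * rexp (-π*y*((((p.1-p.2 : ℤ)):ℝ)+1/2)^2))
      = theta3 (2*y) * theta2 (2*y) := by
    have h : ∀ p : ℤ × ℤ,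
        rexp (-π*y*((((p.1+p.2+1 : ℤ)):ℝ)+1/2)^2) * rexp (-π*y*((((p.1-p.2 : ℤ)):ℝ)+1/2)^2)
        = rexp (-π*(2*y)*((p.1:ℝ)+1)^2) * rexp (-π*(2*y)*((p.2:ℝ)+1/2)^2) := fun p => by
      rw [← Real.exp_add, ← Real.exp_add]; congr 1; push_cast; ring
    rw [tsum_congr h,
      ← tsum_mul_tsum_of_summable_norm (snormc 1 h2y) (snorm2 h2y)]
    congr 1
    have := Equiv.tsum_eq (Equiv.addRight (1:ℤ)) (fun n : ℤ => rexp (-π*(2*y)*(n:ℝ)^2))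
    rw [theta3, ← this]
    exact tsum_congr fun n => by
      simp only [Equiv.coe_addRight]
      push_cast; ring_nf
  rw [hb1, hb2]; ring

lemma theta3_half : theta3 (1/2) = Real.sqrt 2 * theta3 2 := by
  have h := Real.tsum_exp_neg_mul_int_sq (a := (1/2:ℝ)) (by norm_num)
  have h1 : (1:ℝ)/((1/2:ℝ) ^ ((1/2:ℝ))) = Real.sqrt 2 := by
    have : ((1/2:ℝ)) ^ ((1/2:ℝ)) = (Real.sqrt 2)⁻¹ := by
      rw [← Real.sqrt_eq_rpow, show ((1:ℝ)/2) = 2⁻¹ by norm_num, Real.sqrt_inv]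
    rw [this, one_div, inv_inv]
  rw [theta3, theta3, h, h1]
  congr 1
  exact tsum_congr fun n => by congr 1; ring

lemma jacobi {y : ℝ} (hy : 0 < y) : theta2 y ^ 4 + theta4 y ^ 4 = theta3 y ^ 4 := by
  have h1 := idA hy
  have h2 := idB hy
  have h3 := idC hy
  linear_combination (theta2 y^2 + 2*(theta2 (2*y)*theta3 (2*y))) * h3
    + (theta4 y^2 + (theta3 (2*y)^2 - theta2 (2*y)^2)) * h2
    - (theta3 y^2 + (theta3 (2*y)^2 + theta2 (2*y)^2)) * h1

lemma t24_one : theta2 1 ^ 2 = theta4 1 ^ 2 := by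
  have hA1 := idA (y := 1/2) (by norm_num)
  have hA2 := idA (y := 1) one_pos
  have hB := idB (y := 1) one_pos
  norm_num at hA1 hA2 hB
  have hsq : theta3 (1/2) ^ 2 = 2 * theta3 2 ^ 2 := by
    rw [theta3_half, mul_pow, Real.sq_sqrt (by norm_num : (0:ℝ) ≤ 2)]
  linarith

lemma theta3_pos {y : ℝ} (hy : 0 < y) : 0 < theta3 y := by
  rw [theta3]
  exact Summable.tsum_pos (summable3 hy) (fun n => (Real.exp_pos _).le) 0 (Real.exp_pos _)

lemma zfun_nonneg {y : ℝ} (hy : 0 < y) : 0 ≤ zfun y := by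
  have h3 := theta3_pos hy
  have h8 : (0:ℝ) < theta3 y ^ 8 := by positivity
  exact div_nonneg (mul_nonneg (by positivity) (by positivity)) h8.le

lemma zfun_le {y : ℝ} (hy : 0 < y) : zfun y ≤ 1/4 := by
  have hJ := jacobi hy
  have h3 := theta3_pos hy
  have h8 : (0:ℝ) < theta3 y ^ 8 := by positivity
  rw [zfun, div_le_iff₀ h8]
  have h8e : theta3 y ^ 8 = (theta2 y ^ 4 + theta4 y ^ 4) ^ 2 := by rw [hJ]; ring
  nlinarith [sq_nonneg (theta2 y ^ 4 - theta4 y ^ 4)]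

lemma zfun_one : zfun 1 = 1/4 := by
  have h24 : theta2 1 ^ 4 = theta4 1 ^ 4 := by
    rw [show (4:ℕ) = 2*2 from rfl, pow_mul, pow_mul, t24_one]
  have hJ := jacobi one_pos
  have h3 := theta3_pos one_pos
  have h34 : (0:ℝ) < theta3 1 ^ 4 := by positivity
  have hApos : 0 < theta2 1 ^ 4 := by nlinarith
  rw [zfun]
  have h8 : theta3 1 ^ 8 = (theta2 1 ^ 4 + theta2 1 ^ 4) ^ 2 := by
    rw [show theta3 1 ^ 8 = (theta3 1 ^ 4)^2 by ring, ← hJ, h24]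
  rw [h8, ← h24, div_eq_iff (by nlinarith)]
  ring

lemma P24_le {z : ℝ} (h0 : 0 ≤ z) (h1 : z ≤ 1/4) : P24 (1/4) ≤ P24 z := by
  simp only [P24]
  nlinarith [mul_nonneg (sub_nonneg.2 h1)
    (by nlinarith [sq_nonneg z] : (0:ℝ) ≤ z^2 + z/16 + 193/64)]

end SecrecyAux

theorem secrecy_dim24 :
    (∀ y : ℝ, 0 < y → P24 (1 / 4) ≤ P24 (zfun y)) ∧ 0 < P24 (1 / 4) ∧
      (∀ y : ℝ, 0 < y → (P24 (zfun y))⁻¹ ≤ (P24 (zfun 1))⁻¹) ∧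
      (P24 (zfun 1))⁻¹ = (P24 (1 / 4))⁻¹ := by
  have hmain : ∀ y : ℝ, 0 < y → P24 (1 / 4) ≤ P24 (zfun y) := fun y hy =>
    SecrecyAux.P24_le (SecrecyAux.zfun_nonneg hy) (SecrecyAux.zfun_le hy)
  have hpos : 0 < P24 (1 / 4) := by norm_num [P24]
  refine ⟨hmain, hpos, fun y hy => ?_, by rw [SecrecyAux.zfun_one]⟩
  rw [SecrecyAux.zfun_one]
  exact inv_anti₀ hpos (hmain y hy)
end

section
/- For every real g with 0 < g ≤ exp(−π), the derivative of the function g ↦ 1/(24g) + ∑_{n=1}^{∞} n (−1)^n g^{n−1} / (1 + (−g)^n) is negative; that is, −1/(24 g²) + ∑_{n=1}^{∞} ( n(n−1)(−1)^n g^{n−2} / (1 + (−g)^n) − n² g^{2(n−1)} / (1 + (−g)^n)² ) < 0. -/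
/-!
On `0 ≤ x ≤ r < 1` every denominator `1 + (-x)^(n+1)` is at least `1 - r`, so the termwise
derivatives of the series are dominated by polynomial-times-geometric series, which justifies
differentiating term by term. Dropping the negative squared terms and bounding the denominators
below by `1 - g` gives `∑ ≤ ∑ (n+1) n g^(n-1) / (1 - g) = 2 / (1 - g)^4`, and for
`g ≤ exp (-π) < 1/10` this is smaller than `1 / (24 g^2)`.
-/

/-- The logarithmic derivative in `g` of `g^(1/24) * ∏ (1 + (-g)^n)`. -/
noncomputable def logDerivF (g : ℝ) : ℝ :=
  1 / (24 * g) + ∑' n : ℕ, ((n : ℝ) + 1) * (-1) ^ (n + 1) * g ^ n / (1 + (-g) ^ (n + 1))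

lemma summable_succ_pow_mul_geometric (k : ℕ) {r : ℝ} (hr : ‖r‖ < 1) :
    Summable fun n : ℕ => ((n : ℝ) + 1) ^ k * r ^ n := by
  simp_rw [add_pow, one_pow, mul_one, Finset.sum_mul]
  exact summable_sum fun i _ =>
    ((summable_pow_mul_geometric_of_norm_lt_one i hr).mul_left (k.choose i : ℝ)).congr
      fun n => by ring

lemma hasSum_succ_mul_mul_pow_pred {x : ℝ} (hx : ‖x‖ < 1) :
    HasSum (fun n : ℕ => ((n : ℝ) + 1) * n * x ^ (n - 1)) (2 / (1 - x) ^ 3) := by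
  refine (hasSum_nat_add_iff' 1).mp ?_
  have h := (hasSum_choose_mul_geometric_of_norm_lt_one 2 hx).mul_left 2
  rw [Finset.sum_range_one, Nat.cast_zero, mul_zero, zero_mul, sub_zero,
    show 2 / (1 - x) ^ 3 = 2 * (1 / (1 - x) ^ (2 + 1)) by ring]
  refine h.congr_fun fun n => ?_
  rw [Nat.cast_choose_two]
  push_cast
  ring

lemma one_sub_le_one_add_neg_pow {x : ℝ} (hx0 : 0 ≤ x) (hx1 : x ≤ 1) (n : ℕ) :
    1 - x ≤ 1 + (-x) ^ (n + 1) := by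
  have h := neg_abs_le ((-x) ^ (n + 1))
  rw [abs_pow, abs_neg, abs_of_nonneg hx0] at h
  linarith [pow_le_of_le_one (n := n + 1) hx0 hx1 (by omega)]

noncomputable def logDerivTerm (n : ℕ) (x : ℝ) : ℝ :=
  ((n : ℝ) + 1) * (-1) ^ (n + 1) * x ^ n / (1 + (-x) ^ (n + 1))

-- At `n = 0` the truncated exponent `n - 1` is harmless: the factor `n` vanishes.
noncomputable def logDerivTermDeriv (n : ℕ) (x : ℝ) : ℝ :=
  ((n : ℝ) + 1) * n * (-1) ^ (n + 1) * x ^ (n - 1) / (1 + (-x) ^ (n + 1))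
    - ((n : ℝ) + 1) ^ 2 * x ^ (2 * n) / (1 + (-x) ^ (n + 1)) ^ 2

lemma hasDerivAt_logDerivTerm (n : ℕ) {x : ℝ} (hx : 1 + (-x) ^ (n + 1) ≠ 0) :
    HasDerivAt (logDerivTerm n) (logDerivTermDeriv n x) x := by
  have hnum := (hasDerivAt_pow n x).const_mul (((n : ℝ) + 1) * (-1) ^ (n + 1))
  have hden : HasDerivAt (fun y : ℝ => 1 + (-y) ^ (n + 1)) ((n + 1 : ℕ) * (-x) ^ n * -1) x :=
    ((hasDerivAt_neg x).pow (n + 1)).const_add 1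
  refine (hnum.div hden hx).congr_deriv ?_
  have hsign : ((-1 : ℝ) ^ n) ^ 2 = 1 := by
    rw [← pow_mul, mul_comm, pow_mul, neg_one_sq, one_pow]
  have hcross : ((n : ℝ) + 1) * (-1) ^ (n + 1) * x ^ n * ((n + 1 : ℕ) * (-x) ^ n * -1)
      = ((n : ℝ) + 1) ^ 2 * x ^ (2 * n) := by
    push_cast
    rw [neg_pow x]
    linear_combination (((n : ℝ) + 1) ^ 2 * x ^ (2 * n)) * hsign
  rw [hcross, logDerivTermDeriv]
  generalize 1 + (-x) ^ (n + 1) = D at hx ⊢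
  field_simp

lemma abs_logDerivTerm_le {x : ℝ} (hx0 : 0 ≤ x) (hx1 : x < 1) (n : ℕ) :
    |logDerivTerm n x| ≤ ((n : ℝ) + 1) * x ^ n / (1 - x) := by
  have hD := one_sub_le_one_add_neg_pow hx0 hx1.le n
  have hD0 : 0 < 1 + (-x) ^ (n + 1) := by linarith
  rw [logDerivTerm, abs_div, abs_of_pos hD0, abs_mul, abs_mul, abs_pow, abs_neg, abs_one, one_pow,
    mul_one, abs_of_nonneg (by positivity), abs_of_nonneg (by positivity)]
  gcongr

lemma logDerivTermDeriv_le {x : ℝ} (hx0 : 0 ≤ x) (hx1 : x < 1) (n : ℕ) :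
    logDerivTermDeriv n x ≤ ((n : ℝ) + 1) * n * x ^ (n - 1) / (1 - x) := by
  have hD := one_sub_le_one_add_neg_pow hx0 hx1.le n
  have hsign : (-1 : ℝ) ^ (n + 1) ≤ 1 := (le_abs_self _).trans (by simp)
  calc logDerivTermDeriv n x
      ≤ ((n : ℝ) + 1) * n * (-1) ^ (n + 1) * x ^ (n - 1) / (1 + (-x) ^ (n + 1)) :=
        sub_le_self _ (by positivity)
    _ ≤ ((n : ℝ) + 1) * n * 1 * x ^ (n - 1) / (1 + (-x) ^ (n + 1)) := by
        gcongr
        linarith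
    _ ≤ ((n : ℝ) + 1) * n * x ^ (n - 1) / (1 - x) := by
        rw [mul_one]
        gcongr

lemma abs_logDerivTermDeriv_le {x r : ℝ} (hx0 : 0 ≤ x) (hxr : x ≤ r) (hr1 : r < 1) (n : ℕ) :
    |logDerivTermDeriv n x| ≤
      ((n : ℝ) + 1) * n * r ^ (n - 1) / (1 - r) + ((n : ℝ) + 1) ^ 2 * r ^ n / (1 - r) ^ 2 := by
  have hD : 1 - r ≤ 1 + (-x) ^ (n + 1) := by
    linarith [one_sub_le_one_add_neg_pow hx0 (hxr.trans hr1.le) n]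
  have hD0 : 0 < 1 + (-x) ^ (n + 1) := by linarith
  have hr0 : 0 ≤ r := hx0.trans hxr
  have hpow : x ^ (2 * n) ≤ r ^ n := calc
    x ^ (2 * n) ≤ x ^ n := pow_le_pow_of_le_one hx0 (hxr.trans hr1.le) (by omega)
    _ ≤ r ^ n := by gcongr
  calc |logDerivTermDeriv n x|
      ≤ |((n : ℝ) + 1) * n * (-1) ^ (n + 1) * x ^ (n - 1) / (1 + (-x) ^ (n + 1))|
        + |((n : ℝ) + 1) ^ 2 * x ^ (2 * n) / (1 + (-x) ^ (n + 1)) ^ 2| := abs_sub _ _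
    _ = ((n : ℝ) + 1) * n * x ^ (n - 1) / (1 + (-x) ^ (n + 1))
        + ((n : ℝ) + 1) ^ 2 * x ^ (2 * n) / (1 + (-x) ^ (n + 1)) ^ 2 := by
        simp [abs_div, abs_mul, abs_of_pos hD0, abs_of_nonneg hx0,
          abs_of_pos (Nat.cast_add_one_pos (α := ℝ) n)]
    _ ≤ _ := by gcongr

lemma summable_logDerivTermDeriv_bound {r : ℝ} (hr0 : 0 ≤ r) (hr1 : r < 1) :
    Summable fun n : ℕ =>
      ((n : ℝ) + 1) * n * r ^ (n - 1) / (1 - r) + ((n : ℝ) + 1) ^ 2 * r ^ n / (1 - r) ^ 2 := by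
  have hr : ‖r‖ < 1 := by rwa [Real.norm_of_nonneg hr0]
  exact ((hasSum_succ_mul_mul_pow_pred hr).summable.div_const _).add
    ((summable_succ_pow_mul_geometric 2 hr).div_const _)

lemma hasDerivAt_tsum_logDerivTerm {x : ℝ} (hx0 : 0 < x) (hx1 : x < 1) :
    HasDerivAt (fun y => ∑' n, logDerivTerm n y) (∑' n, logDerivTermDeriv n x) x := by
  obtain ⟨r, hxr, hr1⟩ := exists_between hx1
  have hx : ‖x‖ < 1 := by rwa [Real.norm_of_nonneg hx0.le]
  have hsum : Summable fun n => logDerivTerm n x :=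
    .of_norm_bounded ((summable_succ_pow_mul_geometric 1 hx).div_const (1 - x)) fun n => by
      simpa using abs_logDerivTerm_le hx0.le hx1 n
  refine hasDerivAt_tsum_of_isPreconnected
    (summable_logDerivTermDeriv_bound (hx0.trans hxr).le hr1) isOpen_Ioo isPreconnected_Ioo
    (fun n y hy => hasDerivAt_logDerivTerm n ?_)
    (fun n y hy => abs_logDerivTermDeriv_le hy.1.le hy.2.le hr1 n) ⟨hx0, hxr⟩ hsum ⟨hx0, hxr⟩
  have hy1 : y < 1 := hy.2.trans hr1
  exact ((sub_pos.2 hy1).trans_le (one_sub_le_one_add_neg_pow hy.1.le hy1.le n)).ne'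

lemma hasDerivAt_logDerivF {x : ℝ} (hx0 : 0 < x) (hx1 : x < 1) :
    HasDerivAt logDerivF (-1 / (24 * x ^ 2) + ∑' n, logDerivTermDeriv n x) x := by
  have h24 : HasDerivAt (fun y : ℝ => 1 / (24 * y)) (-1 / (24 * x ^ 2)) x := by
    have h := ((hasDerivAt_id' x).const_mul 24).inv (by positivity)
    simp only [one_div]
    exact h.congr_deriv (by field_simp)
  exact h24.add (hasDerivAt_tsum_logDerivTerm hx0 hx1)

lemma tsum_logDerivTermDeriv_le {x : ℝ} (hx0 : 0 ≤ x) (hx1 : x < 1) :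
    ∑' n, logDerivTermDeriv n x ≤ 2 / (1 - x) ^ 4 := by
  have hx : ‖x‖ < 1 := by rwa [Real.norm_of_nonneg hx0]
  have hsum : Summable fun n => logDerivTermDeriv n x :=
    .of_norm_bounded (summable_logDerivTermDeriv_bound hx0 hx1) fun n =>
      abs_logDerivTermDeriv_le hx0 le_rfl hx1 n
  calc ∑' n, logDerivTermDeriv n x ≤ 2 / (1 - x) ^ 3 / (1 - x) :=
        hasSum_le (logDerivTermDeriv_le hx0 hx1) hsum.hasSum
          ((hasSum_succ_mul_mul_pow_pred hx).div_const _)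
    _ = 2 / (1 - x) ^ 4 := by rw [div_div, ← pow_succ]

lemma logDerivTermDeriv_eq_zpow (n : ℕ) (x : ℝ) :
    logDerivTermDeriv n x =
      ((n : ℝ) + 1) * (n : ℝ) * (-1) ^ (n + 1) * x ^ ((n : ℤ) - 1) / (1 + (-x) ^ (n + 1))
        - ((n : ℝ) + 1) ^ 2 * x ^ (2 * n) / (1 + (-x) ^ (n + 1)) ^ 2 := by
  cases n with
  | zero => simp [logDerivTermDeriv]
  | succ m => simp [logDerivTermDeriv]

lemma exp_neg_pi_lt : Real.exp (-Real.pi) < 1 / 10 := by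
  calc Real.exp (-Real.pi) < Real.exp (-1) ^ 3 := by
        rw [← Real.exp_nat_mul]
        exact Real.exp_lt_exp.2 (by push_cast; linarith [Real.pi_gt_three])
    _ < 0.3678794412 ^ 3 := by gcongr; exact Real.exp_neg_one_lt_d9
    _ < 1 / 10 := by norm_num

lemma two_div_one_sub_pow_four_lt {x : ℝ} (hx0 : 0 < x) (hx : x < 1 / 10) :
    2 / (1 - x) ^ 4 < 1 / (24 * x ^ 2) := by
  have h : (9 / 10 : ℝ) ^ 4 ≤ (1 - x) ^ 4 := by gcongr; linarith
  rw [div_lt_div_iff₀ (by positivity) (by positivity)]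
  nlinarith

theorem logDerivF_deriv_neg (g : ℝ) (hg0 : 0 < g) (hg : g ≤ Real.exp (-Real.pi)) :
    deriv logDerivF g < 0 ∧
      -1 / (24 * g ^ 2) +
          ∑' n : ℕ,
            (((n : ℝ) + 1) * (n : ℝ) * (-1) ^ (n + 1) * g ^ ((n : ℤ) - 1) / (1 + (-g) ^ (n + 1))
              - ((n : ℝ) + 1) ^ 2 * g ^ (2 * n) / (1 + (-g) ^ (n + 1)) ^ 2) < 0 := by
  have hg10 : g < 1 / 10 := hg.trans_lt exp_neg_pi_lt
  have hg1 : g < 1 := by linarith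
  have hneg : -1 / (24 * g ^ 2) + ∑' n, logDerivTermDeriv n g < 0 := by
    rw [neg_div]
    linarith [tsum_logDerivTermDeriv_le hg0.le hg1, two_div_one_sub_pow_four_lt hg0 hg10]
  refine ⟨(hasDerivAt_logDerivF hg0 hg1).deriv ▸ hneg, ?_⟩
  simpa only [logDerivTermDeriv_eq_zpow] using hneg
end
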